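/- Let R be a local ring whose maximal ideal M is principal, and let I be a proper ideal of R. Then I is a 1-absorbing δ-primary ideal of R if and only if either I is a δ-primary ideal of R or M² ⊆ I. -/

import Mathlib

open Ideal

/-- `δ` is an expansion function of the ideals of `R`. -/
def ExpansionFunction (R : Type*) [CommRing R] (δ : Ideal R → Ideal R) : Prop :=
  (∀ I : Ideal R, I ≤ δ I) ∧ ∀ I J : Ideal R, J ≤ I → δ J ≤ δ I

/-- A proper ideal `I` of `R` is 1-absorbing δ-primary if whenever nonunit elements
`a, b, c` satisfy `a * b * c ∈ I`, then `a * b ∈ I` or `c ∈ δ I`. -/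
def IsOneAbsDeltaPrimary {R : Type*} [CommRing R] (δ : Ideal R → Ideal R) (I : Ideal R) : Prop :=
  I ≠ ⊤ ∧ ∀ a b c : R, ¬ IsUnit a → ¬ IsUnit b → ¬ IsUnit c →
    a * b * c ∈ I → a * b ∈ I ∨ c ∈ δ I

/-- A proper ideal `I` of `R` is δ-primary if whenever `a * b ∈ I`,
then `a ∈ I` or `b ∈ δ I`. -/
def IsDeltaPrimary {R : Type*} [CommRing R] (δ : Ideal R → Ideal R) (I : Ideal R) : Prop :=
  I ≠ ⊤ ∧ ∀ a b : R, a * b ∈ I → a ∈ I ∨ b ∈ δ I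

/-- A proper ideal `I` of `R` is δ-semiprimary if whenever `a * b ∈ I`,
then `a ∈ δ I` or `b ∈ δ I`. -/
def IsDeltaSemiprimary {R : Type*} [CommRing R] (δ : Ideal R → Ideal R) (I : Ideal R) : Prop :=
  I ≠ ⊤ ∧ ∀ a b : R, a * b ∈ I → a ∈ δ I ∨ b ∈ δ I

/-- A proper ideal `I` of `R` is 1-absorbing prime if whenever nonunit elements
`a, b, c` satisfy `a * b * c ∈ I`, then `a * b ∈ I` or `c ∈ I`. -/
def IsOneAbsPrime {R : Type*} [CommRing R] (I : Ideal R) : Prop :=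
  I ≠ ⊤ ∧ ∀ a b c : R, ¬ IsUnit a → ¬ IsUnit b → ¬ IsUnit c →
    a * b * c ∈ I → a * b ∈ I ∨ c ∈ I

open IsLocalRing

section

variable {R : Type*} [CommRing R] {δ : Ideal R → Ideal R} {I : Ideal R}

theorem IsDeltaPrimary.isOneAbsDeltaPrimary (h : IsDeltaPrimary δ I) :
    IsOneAbsDeltaPrimary δ I :=
  ⟨h.1, fun a b c _ _ _ habc => h.2 (a * b) c habc⟩

theorem isOneAbsDeltaPrimary_of_maximalIdeal_sq_le [IsLocalRing R] (hI : I ≠ ⊤)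
    (h : maximalIdeal R ^ 2 ≤ I) : IsOneAbsDeltaPrimary δ I :=
  ⟨hI, fun _ _ _ ha hb _ _ => Or.inl <| h <| pow_two (maximalIdeal R) ▸ mul_mem_mul ha hb⟩

/-- Writing `a = p * r`, absorption forces `r` to be a unit, so `p * b ∈ I`; absorption
applied to `p * p * b` then gives `p * p ∈ I`. -/
theorem IsOneAbsDeltaPrimary.maximalIdeal_sq_le [IsLocalRing R] (h : IsOneAbsDeltaPrimary δ I)
    (hδI : I ≤ δ I) {p : R} (hp : maximalIdeal R = Ideal.span {p}) {a b : R}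
    (hab : a * b ∈ I) (ha : a ∉ I) (hb : b ∉ δ I) : maximalIdeal R ^ 2 ≤ I := by
  have hp_nonunit : ¬IsUnit p := (mem_maximalIdeal p).mp (hp ▸ Ideal.mem_span_singleton_self p)
  have hb_nonunit : ¬IsUnit b := fun hb' => ha ((Ideal.mul_unit_mem_iff_mem I hb').mp hab)
  have ha_nonunit : ¬IsUnit a := fun ha' =>
    hb (hδI ((Ideal.unit_mul_mem_iff_mem I ha').mp hab))
  have ha_mem : a ∈ Ideal.span {p} := hp ▸ (mem_maximalIdeal a).mpr ha_nonunit
  obtain ⟨r, rfl⟩ := Ideal.mem_span_singleton.mp ha_mem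
  have hr : IsUnit r := by
    by_contra hr
    exact (h.2 p r b hp_nonunit hr hb_nonunit hab).elim ha hb
  have hpb : p * b ∈ I := by
    rwa [mul_right_comm, Ideal.mul_unit_mem_iff_mem I hr] at hab
  have hppb : p * p * b ∈ I := mul_assoc p p b ▸ I.mul_mem_left p hpb
  have hpp : p * p ∈ I := (h.2 p p b hp_nonunit hp_nonunit hb_nonunit hppb).resolve_right hb
  rwa [hp, Ideal.span_singleton_pow, Ideal.span_singleton_le_iff_mem, pow_two]

end

theorem local_principal_max_one_abs_delta_primary_iff
    {R : Type*} [CommRing R] [IsLocalRing R]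
    (hprin : (IsLocalRing.maximalIdeal R).IsPrincipal)
    (δ : Ideal R → Ideal R) (hδ : ExpansionFunction R δ)
    (I : Ideal R) (hIproper : I ≠ ⊤) :
    IsOneAbsDeltaPrimary δ I ↔
      (IsDeltaPrimary δ I ∨ (IsLocalRing.maximalIdeal R) ^ 2 ≤ I) := by
  constructor
  · intro h
    refine or_iff_not_imp_left.mpr fun hnot => ?_
    obtain ⟨a, b, hab, ha, hb⟩ : ∃ a b, a * b ∈ I ∧ a ∉ I ∧ b ∉ δ I := by
      simpa [IsDeltaPrimary, hIproper] using hnot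
    obtain ⟨p, hp⟩ := hprin
    exact h.maximalIdeal_sq_le (hδ.1 I) (hp.trans Ideal.submodule_span_eq) hab ha hb
  · rintro (h | h)
    exacts [h.isOneAbsDeltaPrimary, isOneAbsDeltaPrimary_of_maximalIdeal_sq_le hIproper h]
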